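/- For every constrained critical pair s ≈ t [φ] of the LCTRS R and every substitution σ with σ ⊨ φ, either (1) sσ = tσ, or (2) there exist a critical pair u ≈ v of the transformed TRS R̄ and a substitution δ such that sσ = uδ and tσ = vδ. -/

import Mathlib

namespace LCT

/-! ### First-order terms over signature `F` with natural-number variables -/

inductive Term (F : Type) : Type
  | var : ℕ → Term F
  | app : F → List (Term F) → Term F

instance {F : Type} : Inhabited (Term F) := ⟨Term.var 0⟩

namespace Term

variable {F : Type}

/-- Application of a substitution (total map from variables to terms). -/
def subst (σ : ℕ → Term F) : Term F → Term F
  | var x => σ x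
  | app f ts => app f (ts.attach.map fun ⟨t, _⟩ => subst σ t)

/-- The list of (occurrences of) variables of a term. -/
def varsList : Term F → List ℕ
  | var x => [x]
  | app _ ts => (ts.attach.map fun ⟨t, _⟩ => varsList t).flatten

/-- The set of variables of a term. -/
def vars (t : Term F) : Set ℕ := {x | x ∈ t.varsList}

/-- Number of occurrences of the variable `x` in a term. -/
def count (x : ℕ) : Term F → ℕ
  | var y => if y = x then 1 else 0
  | app _ ts => (ts.attach.map fun ⟨t, _⟩ => count x t).sum

/-- The subterm at a position (a position is a list of argument indices). -/
def subtermAt : Term F → List ℕ → Option (Term F)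
  | t, [] => some t
  | var _, _ :: _ => none
  | app _ ts, i :: p => match ts[i]? with
    | some t => subtermAt t p
    | none => none

/-- Replacement of the subterm at a position. -/
def replaceAt : Term F → List ℕ → Term F → Option (Term F)
  | _, [], u => some u
  | var _, _ :: _, _ => none
  | app f ts, i :: p, u => match ts[i]? with
    | some t => match replaceAt t p u with
      | some t' => some (app f (ts.set i t'))
      | none => none
    | none => none

/-- Renaming of variables. -/
def rename (π : ℕ → ℕ) (t : Term F) : Term F := t.subst (fun x => var (π x))

/-- The term is not a variable (i.e. its root is a function symbol). -/
def isFun : Term F → Prop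
  | var _ => False
  | app _ _ => True

end Term

/-- Simultaneous replacement at a list of (parallel) positions. -/
def replaceAll {F : Type} : Term F → List (List ℕ × Term F) → Option (Term F)
  | t, [] => some t
  | t, (p, u) :: rest => match t.replaceAt p u with
    | some t' => replaceAll t' rest
    | none => none

/-- Two positions are parallel if neither is a prefix of the other. -/
def ParallelPos (p q : List ℕ) : Prop := ¬ p <+: q ∧ ¬ q <+: p

/-- Prefix every position in the `i`-th member of `Qs` with `i` and collect the results. -/
def posJoin (Qs : List (List (List ℕ))) : List (List ℕ) :=
  (Qs.zipIdx.map fun iq => iq.1.map (iq.2 :: ·)).flatten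

/-- The domain of a substitution. -/
def Dom {F : Type} (σ : ℕ → Term F) : Set ℕ := {x | σ x ≠ Term.var x}

/-! ### Abstract rewriting notions -/

/-- Confluence of an abstract relation. -/
def Confluent {α : Type*} (r : α → α → Prop) : Prop :=
  ∀ s t u, Relation.ReflTransGen r s t → Relation.ReflTransGen r s u →
    ∃ v, Relation.ReflTransGen r t v ∧ Relation.ReflTransGen r u v

/-- Local confluence of an abstract relation. -/
def LocallyConfluent {α : Type*} (r : α → α → Prop) : Prop :=
  ∀ s t u, r s t → r s u →
    ∃ v, Relation.ReflTransGen r t v ∧ Relation.ReflTransGen r u v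

/-- Composition of relations. -/
def Comp {α : Type*} (r s : α → α → Prop) : α → α → Prop := fun a c => ∃ b, r a b ∧ s b c

/-! ### Constrained rewrite rules and LCTRSs -/

/-- A constrained rewrite rule `ℓ → r [φ]`. -/
structure Rule (F : Type) where
  lhs : Term F
  rhs : Term F
  cond : Term F

/-- The logical variables `LVar(ρ) = Var(φ) ∪ (Var(r) ∖ Var(ℓ))` of a rule. -/
def LVar {F : Type} (ρ : Rule F) : Set ℕ := ρ.cond.vars ∪ (ρ.rhs.vars \ ρ.lhs.vars)

/-- `EVar(ρ) = Var(r) ∖ (Var(ℓ) ∪ Var(φ))`, as a list. -/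
def EVarList {F : Type} (ρ : Rule F) : List ℕ :=
  ρ.rhs.varsList.filter fun x => !(ρ.lhs.varsList.contains x || ρ.cond.varsList.contains x)

/-- All variables of a rule. -/
def ruleVars {F : Type} (ρ : Rule F) : Set ℕ := ρ.lhs.vars ∪ ρ.rhs.vars ∪ ρ.cond.vars

/-- Terms all of whose function symbols are theory symbols (logical terms). -/
inductive IsLogical {F : Type} (Fth : Set F) : Term F → Prop
  | var (x : ℕ) : IsLogical Fth (.var x)
  | app {f ts} : f ∈ Fth → (∀ t ∈ ts, IsLogical Fth t) → IsLogical Fth (.app f ts)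

/-- A logically constrained term rewrite system (data part): a signature split into
term symbols `Fte` and theory symbols `Fth` with value constants `Val`, an arity
function, an interpretation `J` of ground logical terms, distinguished symbols
`tt` (the truth value ⊤), `andS` (conjunction) and `eqS` (equality), and a set
of constrained rewrite rules. -/
structure LCTRS (F : Type) where
  Fte : Set F
  Fth : Set F
  Val : Set F
  arity : F → ℕ
  J : Term F → F
  tt : F
  andS : F
  eqS : F
  rules : Set (Rule F)

namespace LCTRS

variable {F : Type}

/-- The term `t` is a value. -/
def isVal (R : LCTRS F) (t : Term F) : Prop := ∃ v ∈ R.Val, t = Term.app v []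

/-- `γ` assigns values to all variables in `S`. -/
def valAssign (R : LCTRS F) (S : Set ℕ) (γ : ℕ → Term F) : Prop := ∀ x ∈ S, R.isVal (γ x)

/-- A ground term (no variables). -/
def Ground (t : Term F) : Prop := t.varsList = []

/-- Validity of a constraint: `J(φγ) = ⊤` for every assignment of values to its variables. -/
def validC (R : LCTRS F) (φ : Term F) : Prop :=
  ∀ γ, R.valAssign φ.vars γ → R.J (φ.subst γ) = R.tt

/-- Satisfiability of a constraint. -/
def satC (R : LCTRS F) (φ : Term F) : Prop :=
  ∃ γ, R.valAssign φ.vars γ ∧ R.J (φ.subst γ) = R.tt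

/-- `γ ⊨ φ`: the substitution `γ` respects the constraint `φ`. -/
def respectsC (R : LCTRS F) (γ : ℕ → Term F) (φ : Term F) : Prop :=
  R.valAssign φ.vars γ ∧ R.validC (φ.subst γ)

/-- `σ ⊨ ρ`: the substitution `σ` respects the constrained rule `ρ`. -/
def respectsRule (R : LCTRS F) (σ : ℕ → Term F) (ρ : Rule F) : Prop :=
  Dom σ = ρ.lhs.vars ∪ ρ.rhs.vars ∪ ρ.cond.vars ∧
  (∀ x ∈ LVar ρ, R.isVal (σ x)) ∧ R.validC (ρ.cond.subst σ)

/-- Validity of the implication `φ ⇒ ψ`. -/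
def validImp (R : LCTRS F) (φ ψ : Term F) : Prop :=
  ∀ γ, R.valAssign (φ.vars ∪ ψ.vars) γ → R.J (φ.subst γ) = R.tt → R.J (ψ.subst γ) = R.tt

/-- The calculation rule `f(x₁,…,xₙ) → y [y = f(x₁,…,xₙ)]` for a theory symbol `f`. -/
def calcRule (R : LCTRS F) (f : F) : Rule F :=
  let xs : List (Term F) := (List.range (R.arity f)).map Term.var
  ⟨Term.app f xs, Term.var (R.arity f),
    Term.app R.eqS [Term.var (R.arity f), Term.app f xs]⟩

/-- `R_rc`: the rules of `R` together with all calculation rules. -/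
def Rrc (R : LCTRS F) : Set (Rule F) :=
  R.rules ∪ {ρ | ∃ f ∈ R.Fth \ R.Val, ρ = R.calcRule f}

/-- The conjunction `a ∧ b` as a logical term. -/
def conj (R : LCTRS F) (a b : Term F) : Term F := Term.app R.andS [a, b]

/-- The truth constant `⊤` as a logical term. -/
def trueT (R : LCTRS F) : Term F := Term.app R.tt []

/-- Conjunction of a list of constraints. -/
def bigConj (R : LCTRS F) (l : List (Term F)) : Term F := l.foldr R.conj R.trueT

/-- `EC_ρ`: the conjunction of `x = x` for all `x ∈ EVar(ρ)`. -/
def EC (R : LCTRS F) (ρ : Rule F) : Term F :=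
  R.bigConj ((EVarList ρ).map fun x => Term.app R.eqS [Term.var x, Term.var x])

/-- Well-formedness of an LCTRS: the axioms on the signature, values,
interpretation, the distinguished logical symbols, and the rules. -/
def WF (R : LCTRS F) : Prop :=
  R.Val ⊆ R.Fth ∧ R.Fte ∩ R.Fth ⊆ R.Val ∧ (∀ ι ∈ R.Val, R.arity ι = 0) ∧
  (∀ t, R.J t ∈ R.Val) ∧ (∀ v ∈ R.Val, R.J (Term.app v []) = v) ∧
  R.tt ∈ R.Val ∧ R.andS ∈ R.Fth \ R.Val ∧ R.arity R.andS = 2 ∧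
  R.eqS ∈ R.Fth \ R.Val ∧ R.arity R.eqS = 2 ∧
  (∀ a b : Term F, IsLogical R.Fth a → IsLogical R.Fth b → Ground a → Ground b →
    (R.J (R.conj a b) = R.tt ↔ (R.J a = R.tt ∧ R.J b = R.tt))) ∧
  (∀ a b : Term F, IsLogical R.Fth a → IsLogical R.Fth b → Ground a → Ground b →
    (R.J (Term.app R.eqS [a, b]) = R.tt ↔ R.J a = R.J b)) ∧
  (∀ ρ ∈ R.rules, (∃ f ts, ρ.lhs = Term.app f ts ∧ f ∈ R.Fte \ R.Fth) ∧
    IsLogical R.Fth ρ.cond)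

/-! ### Rewriting induced by an LCTRS -/

/-- One rewrite step at position `p`. -/
def rstepAt (R : LCTRS F) (p : List ℕ) (s t : Term F) : Prop :=
  ∃ ρ ∈ R.Rrc, ∃ σ, R.respectsRule σ ρ ∧
    s.subtermAt p = some (ρ.lhs.subst σ) ∧ s.replaceAt p (ρ.rhs.subst σ) = some t

/-- The rewrite relation `→_R`. -/
def rstep (R : LCTRS F) (s t : Term F) : Prop := ∃ p, R.rstepAt p s t

/-- A rewrite step at a position below (or equal to) `q`. -/
def rstepGe (R : LCTRS F) (q : List ℕ) (s t : Term F) : Prop :=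
  ∃ p, q <+: p ∧ R.rstepAt p s t

end LCTRS

/-! ### TRSs (unconstrained term rewrite systems) -/

/-- A TRS is a set of rules, i.e. pairs of terms. -/
abbrev TRS (F : Type) := Set (Term F × Term F)

/-- One rewrite step of a TRS at position `p`. -/
def tstepAt {F : Type} (S : TRS F) (p : List ℕ) (s t : Term F) : Prop :=
  ∃ lr ∈ S, ∃ σ : ℕ → Term F,
    s.subtermAt p = some (lr.1.subst σ) ∧ s.replaceAt p (lr.2.subst σ) = some t

/-- The rewrite relation of a TRS. -/
def tstep {F : Type} (S : TRS F) (s t : Term F) : Prop := ∃ p, tstepAt S p s t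

/-- A TRS is left-linear if no variable occurs twice in a left-hand side. -/
def LeftLinearTRS {F : Type} (S : TRS F) : Prop := ∀ lr ∈ S, ∀ x, lr.1.count x ≤ 1

/-! ### The transformed TRS `R̄` of an LCTRS -/

/-- The TRS `R̄`: all value instances `ℓτ → rτ` of constrained rules, together with
the calculation instances `f(v₁,…,vₙ) → J(f(v₁,…,vₙ))`. -/
def barTRS {F : Type} (R : LCTRS F) : TRS F :=
  {lr | ∃ ρ ∈ R.rules, ∃ τ : ℕ → Term F, Dom τ = LVar ρ ∧
      (∀ x ∈ LVar ρ, R.isVal (τ x)) ∧ R.validC (ρ.cond.subst τ) ∧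
      lr = (ρ.lhs.subst τ, ρ.rhs.subst τ)} ∪
  {lr | ∃ f ∈ R.Fth \ R.Val, ∃ vs : List F, vs.length = R.arity f ∧
      (∀ v ∈ vs, v ∈ R.Val) ∧
      lr = (Term.app f (vs.map fun v => Term.app v []),
            Term.app (R.J (Term.app f (vs.map fun v => Term.app v []))) [])}

/-! ### Generic multi-steps and parallel steps -/

/-- Generic multi-step relation over a set of constrained rules with a side
condition `Cond` on the rule and the matching substitution. -/
inductive MStepG {F : Type} (Rules : Set (Rule F)) (Cond : Rule F → (ℕ → Term F) → Prop) :
    Term F → Term F → Prop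
  | var (x : ℕ) : MStepG Rules Cond (.var x) (.var x)
  | app {f : F} {ss ts : List (Term F)} :
      List.Forall₂ (MStepG Rules Cond) ss ts → MStepG Rules Cond (.app f ss) (.app f ts)
  | rule {ρ : Rule F} {σ τ : ℕ → Term F} :
      ρ ∈ Rules → Cond ρ σ → (∀ x, MStepG Rules Cond (σ x) (τ x)) →
      MStepG Rules Cond (ρ.lhs.subst σ) (ρ.rhs.subst τ)

mutual
/-- Generic parallel rewriting, annotated with the list of (parallel) positions of
the contracted redexes; `Root` is the root-step relation. -/
inductive ParP {F : Type} (Root : Term F → Term F → Prop) :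
    List (List ℕ) → Term F → Term F → Prop
  | var (x : ℕ) : ParP Root [] (.var x) (.var x)
  | app {f : F} {Qs ss ts} : ParPs Root Qs ss ts →
      ParP Root (posJoin Qs) (.app f ss) (.app f ts)
  | rule {s t : Term F} : Root s t → ParP Root [[]] s t

inductive ParPs {F : Type} (Root : Term F → Term F → Prop) :
    List (List (List ℕ)) → List (Term F) → List (Term F) → Prop
  | nil : ParPs Root [] [] []
  | cons {Q s t Qs ss ts} : ParP Root Q s t → ParPs Root Qs ss ts →
      ParPs Root (Q :: Qs) (s :: ss) (t :: ts)
end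

/-- Root steps of a TRS. -/
def trootStep {F : Type} (S : TRS F) (s t : Term F) : Prop :=
  ∃ lr ∈ S, ∃ σ : ℕ → Term F, s = lr.1.subst σ ∧ t = lr.2.subst σ

/-- The parallel rewrite relation `⇉^Q` of a TRS. -/
def tparQ {F : Type} (S : TRS F) (Q : List (List ℕ)) : Term F → Term F → Prop :=
  ParP (trootStep S) Q

/-- The parallel rewrite relation `⇉` of a TRS. -/
def tpar {F : Type} (S : TRS F) (s t : Term F) : Prop := ∃ Q, tparQ S Q s t

/-- The multi-step relation `⊸→` of a TRS. -/
def tmstep {F : Type} (S : TRS F) : Term F → Term F → Prop :=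
  MStepG {ρ : Rule F | (ρ.lhs, ρ.rhs) ∈ S} (fun _ _ => True)

namespace LCTRS

variable {F : Type}

/-- Root steps of an LCTRS (on unconstrained terms). -/
def lrootStep (R : LCTRS F) (s t : Term F) : Prop :=
  ∃ ρ ∈ R.Rrc, ∃ σ, R.respectsRule σ ρ ∧ s = ρ.lhs.subst σ ∧ t = ρ.rhs.subst σ

/-- The parallel rewrite relation `⇉^Q` of an LCTRS on terms. -/
def lparQ (R : LCTRS F) (Q : List (List ℕ)) : Term F → Term F → Prop :=
  ParP R.lrootStep Q

/-- The parallel rewrite relation `⇉` of an LCTRS on terms. -/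
def lpar (R : LCTRS F) (s t : Term F) : Prop := ∃ Q, R.lparQ Q s t

/-- The multi-step relation `⊸→` of an LCTRS on terms. -/
def lmstep (R : LCTRS F) : Term F → Term F → Prop :=
  MStepG R.Rrc (fun ρ σ => R.respectsRule σ ρ)

/-! ### Constrained terms and rewriting on them -/

/-- Side condition for rewriting a constrained term with constraint `φ` using
rule `ρ` and substitution `σ`: `σ(x) ∈ Val ∪ Var(φ)` for logical variables,
`φ` is satisfiable and `φ ⇒ ψσ` is valid. -/
def ccond (R : LCTRS F) (φ : Term F) (ρ : Rule F) (σ : ℕ → Term F) : Prop :=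
  (∀ x ∈ LVar ρ, R.isVal (σ x) ∨ ∃ y ∈ φ.vars, σ x = Term.var y) ∧
  R.satC φ ∧ R.validImp φ (ρ.cond.subst σ)

/-- One step on a constrained term (the constraint `φ` is left unchanged) at position `p`. -/
def cstepAt (R : LCTRS F) (φ : Term F) (p : List ℕ) (s t : Term F) : Prop :=
  ∃ ρ ∈ R.Rrc, ∃ σ, R.ccond φ ρ σ ∧
    s.subtermAt p = some (ρ.lhs.subst σ) ∧ s.replaceAt p (ρ.rhs.subst σ) = some t

/-- A step on a constrained term at a position below (or equal to) `q`. -/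
def cstepGe (R : LCTRS F) (φ : Term F) (q : List ℕ) (s t : Term F) : Prop :=
  ∃ p, q <+: p ∧ R.cstepAt φ p s t

/-- Root steps on constrained terms with constraint `φ`. -/
def crootStep (R : LCTRS F) (φ : Term F) (s t : Term F) : Prop :=
  ∃ ρ ∈ R.Rrc, ∃ σ, R.ccond φ ρ σ ∧ s = ρ.lhs.subst σ ∧ t = ρ.rhs.subst σ

/-- The parallel relation `⇉^Q` on constrained terms (constraint unchanged). -/
def cparQ (R : LCTRS F) (φ : Term F) (Q : List (List ℕ)) : Term F → Term F → Prop :=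
  ParP (R.crootStep φ) Q

/-- The multi-step relation `⊸→` on constrained terms (constraint unchanged). -/
def cmstep (R : LCTRS F) (φ : Term F) : Term F → Term F → Prop :=
  MStepG R.Rrc (R.ccond φ)

/-- Equivalence `∼` of constrained terms (domains restricted to the constraint variables). -/
def simTerm (R : LCTRS F) (s φ t ψ : Term F) : Prop :=
  (∀ γ, R.respectsC γ φ → Dom γ = φ.vars →
    ∃ δ, R.respectsC δ ψ ∧ Dom δ = ψ.vars ∧ s.subst γ = t.subst δ) ∧
  (∀ δ, R.respectsC δ ψ → Dom δ = ψ.vars →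
    ∃ γ, R.respectsC γ φ ∧ Dom γ = φ.vars ∧ s.subst γ = t.subst δ)

/-- The equivalence `∼′` of constrained terms (unrestricted domains). -/
def simTerm' (R : LCTRS F) (s φ t ψ : Term F) : Prop :=
  (∀ γ, R.respectsC γ φ → ∃ δ, R.respectsC δ ψ ∧ s.subst γ = t.subst δ) ∧
  (∀ δ, R.respectsC δ ψ → ∃ γ, R.respectsC γ φ ∧ s.subst γ = t.subst δ)

end LCTRS

/-- A constrained pair `s ≈ t [φ]` (the constrained term with binary root `≈`). -/
abbrev CPair (F : Type) := Term F × Term F × Term F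

namespace LCTRS

variable {F : Type}

/-- Equivalence `∼` on constrained pairs `s ≈ t [φ]`. -/
def simPair (R : LCTRS F) (a b : CPair F) : Prop :=
  (∀ γ, R.respectsC γ a.2.2 → Dom γ = a.2.2.vars →
    ∃ δ, R.respectsC δ b.2.2 ∧ Dom δ = b.2.2.vars ∧
      a.1.subst γ = b.1.subst δ ∧ a.2.1.subst γ = b.2.1.subst δ) ∧
  (∀ δ, R.respectsC δ b.2.2 → Dom δ = b.2.2.vars →
    ∃ γ, R.respectsC γ a.2.2 ∧ Dom γ = a.2.2.vars ∧
      a.1.subst γ = b.1.subst δ ∧ a.2.1.subst γ = b.2.1.subst δ)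

/-- A raw rewrite step on the pair inside the first component, below position `1·q`. -/
def rawStepFstGe (R : LCTRS F) (q : List ℕ) (a b : CPair F) : Prop :=
  b.2.2 = a.2.2 ∧ b.2.1 = a.2.1 ∧ R.cstepGe a.2.2 q a.1 b.1

/-- A raw rewrite step on the pair inside the second component, below position `2·q`. -/
def rawStepSndGe (R : LCTRS F) (q : List ℕ) (a b : CPair F) : Prop :=
  b.2.2 = a.2.2 ∧ b.1 = a.1 ∧ R.cstepGe a.2.2 q a.2.1 b.2.1

/-- `~→_{≥1q}` on constrained pairs (`∼ · → · ∼`, step in the first component). -/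
def sstepFstGe (R : LCTRS F) (q : List ℕ) : CPair F → CPair F → Prop :=
  Comp R.simPair (Comp (R.rawStepFstGe q) R.simPair)

/-- `~→_{≥2q}` on constrained pairs (`∼ · → · ∼`, step in the second component). -/
def sstepSndGe (R : LCTRS F) (q : List ℕ) : CPair F → CPair F → Prop :=
  Comp R.simPair (Comp (R.rawStepSndGe q) R.simPair)

/-- A raw multi-step on the pair inside the first component. -/
def rawMStepFst (R : LCTRS F) (a b : CPair F) : Prop :=
  b.2.2 = a.2.2 ∧ b.2.1 = a.2.1 ∧ R.cmstep a.2.2 a.1 b.1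

/-- `~⊸→_{≥1}` on constrained pairs. -/
def smstepFst (R : LCTRS F) : CPair F → CPair F → Prop :=
  Comp R.simPair (Comp R.rawMStepFst R.simPair)

/-- A raw parallel step `⇉^P` on the pair inside the first component. -/
def rawParFst (R : LCTRS F) (P : List (List ℕ)) (a b : CPair F) : Prop :=
  b.2.2 = a.2.2 ∧ b.2.1 = a.2.1 ∧ R.cparQ a.2.2 P a.1 b.1

/-- A raw parallel step `⇉^Q` on the pair inside the second component. -/
def rawParSnd (R : LCTRS F) (Q : List (List ℕ)) (a b : CPair F) : Prop :=
  b.2.2 = a.2.2 ∧ b.1 = a.1 ∧ R.cparQ a.2.2 Q a.2.1 b.2.1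

/-- `~⇉_{≥1}^P` on constrained pairs. -/
def sparFst (R : LCTRS F) (P : List (List ℕ)) : CPair F → CPair F → Prop :=
  Comp R.simPair (Comp (R.rawParFst P) R.simPair)

/-- `~⇉_{≥2}^Q` on constrained pairs. -/
def sparSnd (R : LCTRS F) (Q : List (List ℕ)) : CPair F → CPair F → Prop :=
  Comp R.simPair (Comp (R.rawParSnd Q) R.simPair)

/-- A constrained pair `u ≈ v [ψ]` is trivial if `uσ = vσ` for every `σ ⊨ ψ`. -/
def TrivialC (R : LCTRS F) (u v ψ : Term F) : Prop :=
  ∀ σ, R.respectsC σ ψ → u.subst σ = v.subst σ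

end LCTRS

/-! ### Unification, variants, critical pairs -/

/-- `σ` unifies `s` and `t`. -/
def Unifies {F : Type} (σ : ℕ → Term F) (s t : Term F) : Prop := s.subst σ = t.subst σ

/-- `σ` is a most general unifier of `s` and `t`. -/
def IsMGU {F : Type} (σ : ℕ → Term F) (s t : Term F) : Prop :=
  Unifies σ s t ∧ ∀ θ, Unifies θ s t → ∃ δ, ∀ x, (σ x).subst δ = θ x

/-- `(ℓ₂, r₂)` is a variant (bijective renaming) of `(ℓ₁, r₁)`. -/
def IsVariantP {F : Type} (a b : Term F × Term F) : Prop :=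
  ∃ π : ℕ ≃ ℕ, b.1 = a.1.rename π ∧ b.2 = a.2.rename π

/-- `ρ₂` is a variant (bijective renaming) of the constrained rule `ρ₁`. -/
def IsVariantR {F : Type} (a b : Rule F) : Prop :=
  ∃ π : ℕ ≃ ℕ, b.lhs = a.lhs.rename π ∧ b.rhs = a.rhs.rename π ∧ b.cond = a.cond.rename π

/-- `s ≈ t` is a critical pair of the TRS `S` obtained from an overlap at position `p`. -/
def IsCPAt {F : Type} (S : TRS F) (p : List ℕ) (s t : Term F) : Prop :=
  ∃ (l₁ r₁ l₂ r₂ : Term F) (σ : ℕ → Term F) (l2p : Term F),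
    (∃ lr ∈ S, IsVariantP lr (l₁, r₁)) ∧
    (∃ lr ∈ S, IsVariantP lr (l₂, r₂)) ∧
    (l₁.vars ∪ r₁.vars) ∩ (l₂.vars ∪ r₂.vars) = ∅ ∧
    l₂.subtermAt p = some l2p ∧ l2p.isFun ∧
    IsMGU σ l₁ l2p ∧
    (p = [] → ¬ IsVariantP (l₁, r₁) (l₂, r₂)) ∧
    (l₂.subst σ).replaceAt p (r₁.subst σ) = some s ∧
    t = r₂.subst σ

/-- `s ≈ t [φc]` is a constrained critical pair of the LCTRS `R` obtained from an
overlap at position `p`. -/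
def IsCCPAt {F : Type} (R : LCTRS F) (p : List ℕ) (s t φc : Term F) : Prop :=
  ∃ (ρ₁ ρ₂ : Rule F) (σ : ℕ → Term F) (l2p : Term F),
    (∃ ρ ∈ R.Rrc, IsVariantR ρ ρ₁) ∧
    (∃ ρ ∈ R.Rrc, IsVariantR ρ ρ₂) ∧
    ruleVars ρ₁ ∩ ruleVars ρ₂ = ∅ ∧
    ρ₂.lhs.subtermAt p = some l2p ∧ l2p.isFun ∧
    IsMGU σ ρ₁.lhs l2p ∧
    (∀ x ∈ LVar ρ₁ ∪ LVar ρ₂, R.isVal (σ x) ∨ ∃ y, σ x = Term.var y) ∧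
    R.satC (R.conj (ρ₁.cond.subst σ) (ρ₂.cond.subst σ)) ∧
    (p = [] → ¬ IsVariantR ρ₁ ρ₂ ∨ ¬ (ρ₁.rhs.vars ⊆ ρ₁.lhs.vars)) ∧
    (ρ₂.lhs.subst σ).replaceAt p (ρ₁.rhs.subst σ) = some s ∧
    t = ρ₂.rhs.subst σ ∧
    φc = R.conj (ρ₁.cond.subst σ)
           (R.conj (ρ₂.cond.subst σ) ((R.conj (R.EC ρ₁) (R.EC ρ₂)).subst σ))

/-- `s ≈ t` is a parallel critical pair of the TRS `S`: `Ps` is the list of parallel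
overlap positions and `lsig` is the instantiated left-hand side `ℓσ`. -/
def IsPCP {F : Type} (S : TRS F) (Ps : List (List ℕ)) (lsig s t : Term F) : Prop :=
  ∃ (l r : Term F) (prs : List (List ℕ × Term F × Term F)) (σ : ℕ → Term F),
    Ps = prs.map (·.1) ∧ Ps ≠ [] ∧ Ps.Pairwise ParallelPos ∧
    (∃ lr ∈ S, IsVariantP lr (l, r)) ∧
    (∀ pr ∈ prs, ∃ lr ∈ S, IsVariantP lr pr.2) ∧
    prs.Pairwise (fun a b =>
      (a.2.1.vars ∪ a.2.2.vars) ∩ (b.2.1.vars ∪ b.2.2.vars) = ∅) ∧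
    (∀ pr ∈ prs, (l.vars ∪ r.vars) ∩ (pr.2.1.vars ∪ pr.2.2.vars) = ∅) ∧
    (∀ pr ∈ prs, ∃ u, l.subtermAt pr.1 = some u ∧ u.isFun) ∧
    (∀ pr ∈ prs, ∀ u, l.subtermAt pr.1 = some u → Unifies σ pr.2.1 u) ∧
    (∀ θ : ℕ → Term F, (∀ pr ∈ prs, ∀ u, l.subtermAt pr.1 = some u → Unifies θ pr.2.1 u) →
      ∃ δ, ∀ x, (σ x).subst δ = θ x) ∧
    (∀ lp rp, prs = [([], lp, rp)] → ¬ IsVariantP (lp, rp) (l, r)) ∧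
    lsig = l.subst σ ∧
    replaceAll lsig (prs.map fun pr => (pr.1, pr.2.2.subst σ)) = some s ∧
    t = r.subst σ

/-- `s ≈ t [Φ]` is a constrained parallel critical pair of the LCTRS `R`: `Ps` is the
list of parallel overlap positions and `lsig` is the instantiated left-hand side `ℓσ`. -/
def IsCPCP {F : Type} (R : LCTRS F) (Ps : List (List ℕ)) (lsig s t Φ : Term F) : Prop :=
  ∃ (ρ : Rule F) (prs : List (List ℕ × Rule F)) (σ : ℕ → Term F),
    Ps = prs.map (·.1) ∧ Ps ≠ [] ∧ Ps.Pairwise ParallelPos ∧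
    (∃ ρ' ∈ R.Rrc, IsVariantR ρ' ρ) ∧
    (∀ pr ∈ prs, ∃ ρ' ∈ R.Rrc, IsVariantR ρ' pr.2) ∧
    prs.Pairwise (fun a b => ruleVars a.2 ∩ ruleVars b.2 = ∅) ∧
    (∀ pr ∈ prs, ruleVars ρ ∩ ruleVars pr.2 = ∅) ∧
    (∀ pr ∈ prs, ∃ u, ρ.lhs.subtermAt pr.1 = some u ∧ u.isFun) ∧
    (∀ pr ∈ prs, ∀ u, ρ.lhs.subtermAt pr.1 = some u → Unifies σ pr.2.lhs u) ∧
    (∀ θ : ℕ → Term F,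
      (∀ pr ∈ prs, ∀ u, ρ.lhs.subtermAt pr.1 = some u → Unifies θ pr.2.lhs u) →
      ∃ δ, ∀ x, (σ x).subst δ = θ x) ∧
    (∀ x, (x ∈ LVar ρ ∨ ∃ pr ∈ prs, x ∈ LVar pr.2) →
      R.isVal (σ x) ∨ ∃ y, σ x = Term.var y) ∧
    R.satC (R.conj (ρ.cond.subst σ) (R.bigConj (prs.map fun pr => pr.2.cond.subst σ))) ∧
    (∀ ρε, prs = [([], ρε)] → ¬ IsVariantR ρε ρ ∨ ¬ (ρ.rhs.vars ⊆ ρ.lhs.vars)) ∧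
    lsig = ρ.lhs.subst σ ∧
    replaceAll lsig (prs.map fun pr => (pr.1, pr.2.rhs.subst σ)) = some s ∧
    t = ρ.rhs.subst σ ∧
    Φ = R.conj (ρ.cond.subst σ)
          (R.conj ((R.conj (R.EC ρ) (R.bigConj (prs.map fun pr => R.EC pr.2))).subst σ)
            (R.bigConj (prs.map fun pr => pr.2.cond.subst σ)))

/-- `Var(t, P)`: the variables occurring in subterms of `t` at positions in `P`. -/
def VarsBelow {F : Type} (t : Term F) (P : List (List ℕ)) : Set ℕ :=
  {x | ∃ p ∈ P, ∃ u, t.subtermAt p = some u ∧ x ∈ u.vars}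

/-- `TVar(t, φ, P)`: the non-logical variables (w.r.t. `φ`) in subterms of `t` at
positions in `P`. -/
def TVarsBelow {F : Type} (t φ : Term F) (P : List (List ℕ)) : Set ℕ :=
  {x | ∃ p ∈ P, ∃ u, t.subtermAt p = some u ∧ x ∈ u.vars ∧ x ∉ φ.vars}

/-! ### Closedness conditions -/

namespace LCTRS

variable {F : Type}

/-- A constrained critical pair `s ≈ t [φ]` is development closed. -/
def DevClosedC (R : LCTRS F) (s t φ : Term F) : Prop :=
  ∃ u v ψ, R.smstepFst (s, t, φ) (u, v, ψ) ∧ R.TrivialC u v ψ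

/-- A constrained critical pair (from an overlap at position `p`) is almost
development closed. -/
def AlmostDevClosedC (R : LCTRS F) (p : List ℕ) (s t φ : Term F) : Prop :=
  (p ≠ [] → R.DevClosedC s t φ) ∧
  (p = [] → ∃ a u v ψ, R.smstepFst (s, t, φ) a ∧
    Relation.ReflTransGen (R.sstepSndGe []) a (u, v, ψ) ∧ R.TrivialC u v ψ)

/-- An LCTRS is almost development closed. -/
def AlmostDevClosedLCTRS (R : LCTRS F) : Prop :=
  ∀ p s t φ, IsCCPAt R p s t φ → R.AlmostDevClosedC p s t φ

/-- A constrained critical pair `s ≈ t [φ]` is 1-parallel closed. -/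
def OnePCc (R : LCTRS F) (s t φ : Term F) : Prop :=
  ∃ P a u v ψ, R.sparFst P (s, t, φ) a ∧
    Relation.ReflTransGen (R.sstepSndGe []) a (u, v, ψ) ∧ R.TrivialC u v ψ

/-- A constrained parallel critical pair is 2-parallel closed. -/
def TwoPCc (R : LCTRS F) (Ps : List (List ℕ)) (lsig s t Φ : Term F) : Prop :=
  ∃ Q a u v ψ, R.sparSnd Q (s, t, Φ) a ∧
    Relation.ReflTransGen (R.sstepFstGe []) a (u, v, ψ) ∧ R.TrivialC u v ψ ∧
    TVarsBelow v ψ Q ⊆ TVarsBelow lsig Φ Ps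

/-- An LCTRS is parallel closed. -/
def ParallelClosedLCTRS (R : LCTRS F) : Prop :=
  (∀ p s t φ, IsCCPAt R p s t φ → R.OnePCc s t φ) ∧
  (∀ Ps lsig s t Φ, IsCPCP R Ps lsig s t Φ → R.TwoPCc Ps lsig s t Φ)

/-- Linearity of the left-hand sides in the non-logical variables (this is all that
is needed for left-linearity of the transformed TRS). -/
def LeftLinearOutsideLVar (R : LCTRS F) : Prop :=
  ∀ ρ ∈ R.rules, ∀ x, x ∉ LVar ρ → ρ.lhs.count x ≤ 1

end LCTRS

/-- A TRS is almost development closed. -/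
def AlmostDevClosedTRS {F : Type} (S : TRS F) : Prop :=
  ∀ p s t, IsCPAt S p s t →
    (p ≠ [] → tmstep S s t) ∧
    (p = [] → ∃ w, tmstep S s w ∧ Relation.ReflTransGen (tstep S) t w)

/-- A TRS is 1-parallel closed. -/
def OnePCTRS {F : Type} (S : TRS F) : Prop :=
  ∀ p s t, IsCPAt S p s t → ∃ w, tpar S s w ∧ Relation.ReflTransGen (tstep S) t w

/-- A TRS is 2-parallel closed. -/
def TwoPCTRS {F : Type} (S : TRS F) : Prop :=
  ∀ Ps lsig s t, IsPCP S Ps lsig s t →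
    ∃ v Q, Relation.ReflTransGen (tstep S) s v ∧ tparQ S Q t v ∧
      VarsBelow v Q ⊆ VarsBelow lsig Ps

/-- A TRS is parallel closed. -/
def ParallelClosedTRS {F : Type} (S : TRS F) : Prop := OnePCTRS S ∧ TwoPCTRS S

/-!
Let `σ₀` be the unifier of the overlap and `σ ⊨ φ`. Besides the constraints of `ρ₁` and `ρ₂`,
`φ` contains the trivial equations `x = x` for their extra variables, so every logical variable
of either rule occurs in `φ`; hence `θ = σ₀σ` maps all of them to values and validates both rule
constraints. Instantiating the logical variables of `ρᵢ` by `θ` therefore gives rules of `R̄`,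
and `θ` unifies the overlapping subterms of these instances. Their most general unifier turns the
overlap into a critical pair of `R̄` of which `sσ ≈ tσ` is the `θ`-instance, unless the overlap is
a root overlap of variants; then `sσ = tσ`, since rules of `R̄` satisfy the variable condition.
-/

namespace Term

variable {F : Type}

theorem induct {P : Term F → Prop} (var : ∀ x, P (.var x))
    (app : ∀ f ts, (∀ t ∈ ts, P t) → P (.app f ts)) : ∀ t, P t
  | .var x => var x
  | .app f ts => app f ts fun t _ => induct var app t

@[simp] theorem subst_var (σ : ℕ → Term F) (x : ℕ) : (var x).subst σ = σ x := by simp [subst]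

@[simp] theorem subst_app (σ : ℕ → Term F) (f : F) (ts : List (Term F)) :
    (app f ts).subst σ = app f (ts.map (subst σ)) := by
  simp [subst]

@[simp] theorem mem_vars_var {x y : ℕ} : x ∈ (var y : Term F).vars ↔ x = y := by
  simp [vars, varsList]

@[simp] theorem mem_vars_app {x : ℕ} {f : F} {ts : List (Term F)} :
    x ∈ (app f ts).vars ↔ ∃ t ∈ ts, x ∈ t.vars := by
  simp [vars, varsList, List.mem_flatten]

theorem subst_subst (σ δ : ℕ → Term F) (t : Term F) :
    (t.subst σ).subst δ = t.subst fun x => (σ x).subst δ := by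
  induction t using induct with
  | var x => simp
  | app f ts ih => simpa using List.map_congr_left ih

theorem subst_congr {σ δ : ℕ → Term F} {t : Term F} (h : ∀ x ∈ t.vars, σ x = δ x) :
    t.subst σ = t.subst δ := by
  induction t using induct with
  | var x => simpa using h x
  | app f ts ih =>
    simpa using List.map_congr_left fun t ht => ih t ht fun x hx => h x (mem_vars_app.2 ⟨t, ht, hx⟩)

@[simp] theorem subst_var_eq (t : Term F) : t.subst var = t := by
  induction t using induct with
  | var x => simp
  | app f ts ih => simpa using List.map_congr_left ih

theorem mem_vars_subst {x : ℕ} {σ : ℕ → Term F} {t : Term F} :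
    x ∈ (t.subst σ).vars ↔ ∃ y ∈ t.vars, x ∈ (σ y).vars := by
  induction t using induct with
  | var y => simp
  | app f ts ih =>
    simp only [subst_app, mem_vars_app, List.mem_map]
    constructor
    · rintro ⟨-, ⟨t, ht, rfl⟩, hx⟩
      obtain ⟨y, hy, hxy⟩ := (ih t ht).1 hx
      exact ⟨y, ⟨t, ht, hy⟩, hxy⟩
    · rintro ⟨y, ⟨t, ht, hy⟩, hxy⟩
      exact ⟨_, ⟨t, ht, rfl⟩, (ih t ht).2 ⟨y, hy, hxy⟩⟩

theorem eq_of_subst_eq_of_mem_vars {σ δ : ℕ → Term F} {t : Term F}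
    (h : t.subst σ = t.subst δ) {x : ℕ} (hx : x ∈ t.vars) : σ x = δ x := by
  induction t using induct with
  | var y => simp_all
  | app f ts ih =>
    obtain ⟨t, ht, hxt⟩ := mem_vars_app.1 hx
    simp only [subst_app, app.injEq, true_and, List.map_inj_left] at h
    exact ih t ht (h t ht) hxt

theorem rename_subst (π : ℕ → ℕ) (σ : ℕ → Term F) (t : Term F) :
    (t.rename π).subst σ = t.subst (σ ∘ π) := by
  simp [rename, subst_subst, Function.comp_def]

theorem mem_vars_rename (π : ℕ ≃ ℕ) {x : ℕ} {t : Term F} :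
    π x ∈ (t.rename π).vars ↔ x ∈ t.vars := by
  simp [rename, mem_vars_subst, π.injective.eq_iff]

theorem isFun.subst {t : Term F} (h : t.isFun) (σ : ℕ → Term F) : (t.subst σ).isFun := by
  cases t with
  | var x => exact h.elim
  | app f ts => simp [Term.isFun]

def size : Term F → ℕ
  | var _ => 1
  | app _ ts => 1 + (ts.attach.map fun ⟨t, _⟩ => size t).sum

@[simp] theorem size_var (x : ℕ) : (var x : Term F).size = 1 := by simp [size]

@[simp] theorem size_app (f : F) (ts : List (Term F)) :
    (app f ts).size = 1 + (ts.map size).sum := by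
  simp [size]

theorem size_pos (t : Term F) : 0 < t.size := by
  cases t <;> simp

theorem size_lt_size_app {t : Term F} {f : F} {ts : List (Term F)} (ht : t ∈ ts) :
    t.size < (app f ts).size := by
  have := List.le_sum_of_mem (List.mem_map_of_mem (f := size) ht)
  simp only [size_app]
  omega

theorem size_le_size_subst {x : ℕ} {t : Term F} (σ : ℕ → Term F) (h : x ∈ t.vars) :
    (σ x).size ≤ (t.subst σ).size := by
  induction t using induct with
  | var y => simp_all
  | app f ts ih =>
    obtain ⟨t, ht, hxt⟩ := mem_vars_app.1 h
    rw [subst_app]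
    exact (ih t ht hxt).trans (size_lt_size_app (List.mem_map_of_mem ht)).le

theorem size_lt_size_subst {x : ℕ} {t : Term F} (σ : ℕ → Term F) (h : x ∈ t.vars)
    (ht : t ≠ var x) : (σ x).size < (t.subst σ).size := by
  cases t with
  | var y => simp_all
  | app f ts =>
    obtain ⟨t, ht, hxt⟩ := mem_vars_app.1 h
    rw [subst_app]
    exact (size_le_size_subst σ hxt).trans_lt (size_lt_size_app (List.mem_map_of_mem ht))

theorem subtermAt_subst (σ : ℕ → Term F) :
    ∀ {p : List ℕ} {t u : Term F}, t.subtermAt p = some u →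
      (t.subst σ).subtermAt p = some (u.subst σ)
  | [], t, u, h => by simp_all [subtermAt]
  | i :: p, .app f ts, u, h => by
    simp only [subtermAt, subst_app, List.getElem?_map] at h ⊢
    cases hi : ts[i]? <;> simp_all [subtermAt_subst σ (p := p)]

theorem replaceAt_subst (σ : ℕ → Term F) :
    ∀ {p : List ℕ} {t u v : Term F}, t.replaceAt p u = some v →
      (t.subst σ).replaceAt p (u.subst σ) = some (v.subst σ)
  | [], t, u, v, h => by simp_all [replaceAt]
  | i :: p, .app f ts, u, v, h => by
    simp only [replaceAt, subst_app, List.getElem?_map] at h ⊢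
    cases hi : ts[i]? with
    | none => simp_all
    | some t =>
      cases ht : t.replaceAt p u with
      | none => simp_all
      | some t' =>
        simp only [hi, ht, Option.some.injEq] at h
        simp [← h, replaceAt_subst σ ht, List.map_set]

theorem exists_replaceAt_of_subtermAt (w : Term F) :
    ∀ {p : List ℕ} {t u : Term F}, t.subtermAt p = some u → ∃ v, t.replaceAt p w = some v
  | [], t, u, _ => ⟨w, rfl⟩
  | i :: p, .app f ts, u, h => by
    simp only [subtermAt] at h
    cases hi : ts[i]? with
    | none => simp [hi] at h
    | some t =>
      simp only [hi] at h
      obtain ⟨v, hv⟩ := exists_replaceAt_of_subtermAt w h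
      exact ⟨app f (ts.set i v), by simp [replaceAt, hi, hv]⟩

/-! ### Syntactic unification -/

def UnifiesAll (θ : ℕ → Term F) (E : List (Term F × Term F)) : Prop :=
  ∀ e ∈ E, Unifies θ e.1 e.2

/-- The mgus computed by syntactic unification have this form; it lets every unifier `θ`
serve as its own instantiation of `μ`. -/
def IsStrongMGU (μ : ℕ → Term F) (E : List (Term F × Term F)) : Prop :=
  UnifiesAll μ E ∧ ∀ θ, UnifiesAll θ E → (fun x => (μ x).subst θ) = θ

def substEqns (σ : ℕ → Term F) (E : List (Term F × Term F)) : List (Term F × Term F) :=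
  E.map fun e => (e.1.subst σ, e.2.subst σ)

def eqnVars (E : List (Term F × Term F)) : Finset ℕ :=
  (E.flatMap fun e => e.1.varsList ++ e.2.varsList).toFinset

def eqnSize (E : List (Term F × Term F)) : ℕ :=
  (E.map fun e => e.1.size + e.2.size).sum

theorem unifiesAll_cons {θ : ℕ → Term F} {s t : Term F} {E : List (Term F × Term F)} :
    UnifiesAll θ ((s, t) :: E) ↔ s.subst θ = t.subst θ ∧ UnifiesAll θ E := by
  simp [UnifiesAll, Unifies]

theorem unifiesAll_swap {θ : ℕ → Term F} {s t : Term F} {E : List (Term F × Term F)} :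
    UnifiesAll θ ((s, t) :: E) ↔ UnifiesAll θ ((t, s) :: E) := by
  simp only [unifiesAll_cons, eq_comm]

theorem unifiesAll_append {θ : ℕ → Term F} {E E' : List (Term F × Term F)} :
    UnifiesAll θ (E ++ E') ↔ UnifiesAll θ E ∧ UnifiesAll θ E' := by
  simp [UnifiesAll, or_imp, forall_and]

theorem unifiesAll_zip {θ : ℕ → Term F} :
    ∀ {ss ts : List (Term F)}, ss.length = ts.length →
      (ss.map (subst θ) = ts.map (subst θ) ↔ UnifiesAll θ (ss.zip ts))
  | [], [], _ => by simp [UnifiesAll]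
  | s :: ss, t :: ts, h => by
    simp [unifiesAll_cons, unifiesAll_zip (ss := ss) (ts := ts) (by simpa using h)]

theorem unifiesAll_decompose {θ : ℕ → Term F} {f : F} {ss ts : List (Term F)}
    {E : List (Term F × Term F)} (h : ss.length = ts.length) :
    UnifiesAll θ ((app f ss, app f ts) :: E) ↔ UnifiesAll θ (ss.zip ts ++ E) := by
  simp [unifiesAll_cons, unifiesAll_append, unifiesAll_zip h]

theorem unifiesAll_substEqns {θ σ : ℕ → Term F} {E : List (Term F × Term F)} :
    UnifiesAll θ (substEqns σ E) ↔ UnifiesAll (fun y => (σ y).subst θ) E := by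
  simp only [UnifiesAll, substEqns, List.forall_mem_map, Unifies, subst_subst]

theorem update_subst_eq {θ : ℕ → Term F} {x : ℕ} {t : Term F} (hx : θ x = t.subst θ) :
    (fun y => (Function.update var x t y).subst θ) = θ := by
  funext y
  by_cases hy : y = x
  · subst hy; simp [hx]
  · simp [hy]

theorem IsStrongMGU.congr {μ : ℕ → Term F} {E E' : List (Term F × Term F)}
    (h : ∀ θ, UnifiesAll θ E ↔ UnifiesAll θ E') (hμ : IsStrongMGU μ E) : IsStrongMGU μ E' :=
  ⟨(h μ).1 hμ.1, fun θ hθ => hμ.2 θ ((h θ).2 hθ)⟩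

theorem not_mem_vars_of_unifies {θ : ℕ → Term F} {x : ℕ} {t : Term F}
    (hx : θ x = t.subst θ) (ht : t ≠ var x) : x ∉ t.vars := fun hmem =>
  (size_lt_size_subst θ hmem ht).ne (congrArg size hx)

theorem IsStrongMGU.update {μ : ℕ → Term F} {x : ℕ} {t : Term F} (hx : x ∉ t.vars)
    {E : List (Term F × Term F)} (hμ : IsStrongMGU μ (substEqns (Function.update var x t) E)) :
    IsStrongMGU (fun y => (Function.update var x t y).subst μ) ((var x, t) :: E) := by
  have ht : t.subst (Function.update var x t) = t :=
    (subst_congr fun y hy => by simp [show y ≠ x from fun h => hx (h ▸ hy)]).trans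
      (subst_var_eq t)
  refine ⟨unifiesAll_cons.2 ⟨?_, ?_⟩, fun θ hθ => ?_⟩
  · simp [← subst_subst, ht]
  · exact unifiesAll_substEqns.1 hμ.1
  · obtain ⟨hxθ, hE⟩ := unifiesAll_cons.1 hθ
    rw [subst_var] at hxθ
    have hE' : UnifiesAll θ (substEqns (Function.update var x t) E) := by
      rwa [unifiesAll_substEqns, update_subst_eq hxθ]
    funext y
    rw [subst_subst, hμ.2 θ hE']
    exact congrFun (update_subst_eq hxθ) y

theorem eqnVars_cons (s t : Term F) (E : List (Term F × Term F)) :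
    eqnVars ((s, t) :: E) = s.varsList.toFinset ∪ t.varsList.toFinset ∪ eqnVars E := by
  ext; simp [eqnVars]

theorem eqnVars_swap (s t : Term F) (E : List (Term F × Term F)) :
    eqnVars ((s, t) :: E) = eqnVars ((t, s) :: E) := by
  simp only [eqnVars_cons, Finset.union_comm s.varsList.toFinset]

theorem mem_eqnVars {y : ℕ} {E : List (Term F × Term F)} :
    y ∈ eqnVars E ↔ ∃ e ∈ E, y ∈ e.1.vars ∨ y ∈ e.2.vars := by
  simp [eqnVars, vars]

theorem mem_vars_subst_update {x y : ℕ} {t u : Term F} (hx : x ∉ t.vars)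
    (hy : y ∈ (u.subst (Function.update var x t)).vars) : (y ∈ u.vars ∨ y ∈ t.vars) ∧ y ≠ x := by
  obtain ⟨z, hz, hyz⟩ := mem_vars_subst.1 hy
  by_cases hzx : z = x
  · subst hzx
    rw [Function.update_self] at hyz
    exact ⟨Or.inr hyz, fun h => hx (h ▸ hyz)⟩
  · rw [Function.update_of_ne hzx, mem_vars_var] at hyz
    exact hyz ▸ ⟨Or.inl hz, hzx⟩

theorem card_eqnVars_substEqns_update_lt {x : ℕ} {t : Term F} (hx : x ∉ t.vars)
    (E : List (Term F × Term F)) :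
    (eqnVars (substEqns (Function.update var x t) E)).card < (eqnVars ((var x, t) :: E)).card := by
  have key : ∀ y ∈ eqnVars (substEqns (Function.update var x t) E),
      y ∈ eqnVars ((var x, t) :: E) ∧ y ≠ x := by
    intro y hy
    obtain ⟨a, b, he, hab⟩ : ∃ a b, (a, b) ∈ E ∧
        (y ∈ (a.subst (Function.update var x t)).vars ∨
          y ∈ (b.subst (Function.update var x t)).vars) := by
      simpa [substEqns] using mem_eqnVars.1 hy
    have hmem : (y ∈ a.vars ∨ y ∈ b.vars ∨ y ∈ t.vars) ∧ y ≠ x := by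
      rcases hab with h | h
      · have := mem_vars_subst_update hx h; tauto
      · have := mem_vars_subst_update hx h; tauto
    refine ⟨mem_eqnVars.2 ?_, hmem.2⟩
    rcases hmem.1 with h | h | h
    · exact ⟨_, List.mem_cons_of_mem _ he, Or.inl h⟩
    · exact ⟨_, List.mem_cons_of_mem _ he, Or.inr h⟩
    · exact ⟨_, List.mem_cons_self, Or.inr h⟩
  refine Finset.card_lt_card ⟨fun y hy => (key y hy).1, fun h => ?_⟩
  exact (key x (h (mem_eqnVars.2 ⟨_, List.mem_cons_self, Or.inl (mem_vars_var.2 rfl)⟩))).2 rfl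

theorem eqnVars_subset_cons (e : Term F × Term F) (E : List (Term F × Term F)) :
    eqnVars E ⊆ eqnVars (e :: E) := fun y hy => by
  obtain ⟨e', he', h⟩ := mem_eqnVars.1 hy
  exact mem_eqnVars.2 ⟨e', List.mem_cons_of_mem _ he', h⟩

theorem eqnSize_cons (s t : Term F) (E : List (Term F × Term F)) :
    eqnSize ((s, t) :: E) = s.size + t.size + eqnSize E := by
  simp [eqnSize]

theorem eqnSize_lt_cons (e : Term F × Term F) (E : List (Term F × Term F)) :
    eqnSize E < eqnSize (e :: E) := by
  have := size_pos e.1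
  rw [eqnSize_cons]
  omega

theorem eqnSize_zip_le : ∀ ss ts : List (Term F),
    eqnSize (ss.zip ts) ≤ (ss.map size).sum + (ts.map size).sum
  | [], _ => by simp [eqnSize]
  | _ :: _, [] => by simp [eqnSize]
  | s :: ss, t :: ts => by
    have := eqnSize_zip_le ss ts
    simp only [List.zip_cons_cons, eqnSize_cons, List.map_cons, List.sum_cons]
    omega

theorem eqnVars_decompose_subset (f g : F) (ss ts : List (Term F)) (E : List (Term F × Term F)) :
    eqnVars (ss.zip ts ++ E) ⊆ eqnVars ((app f ss, app g ts) :: E) := fun y hy => by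
  obtain ⟨e, he, h⟩ := mem_eqnVars.1 hy
  rcases List.mem_append.1 he with he | he
  · have hm := List.of_mem_zip he
    refine mem_eqnVars.2 ⟨_, List.mem_cons_self, ?_⟩
    rcases h with h | h
    · exact Or.inl (mem_vars_app.2 ⟨e.1, hm.1, h⟩)
    · exact Or.inr (mem_vars_app.2 ⟨e.2, hm.2, h⟩)
  · exact mem_eqnVars.2 ⟨e, List.mem_cons_of_mem _ he, h⟩

theorem eqnSize_decompose_lt (f g : F) (ss ts : List (Term F)) (E : List (Term F × Term F)) :
    eqnSize (ss.zip ts ++ E) < eqnSize ((app f ss, app g ts) :: E) := by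
  have := eqnSize_zip_le ss ts
  have happ : eqnSize (ss.zip ts ++ E) = eqnSize (ss.zip ts) + eqnSize E := by
    simp [eqnSize]
  rw [happ, eqnSize_cons, size_app, size_app]
  omega

theorem exists_isStrongMGU :
    ∀ E : List (Term F × Term F), (∃ θ, UnifiesAll θ E) → ∃ μ, IsStrongMGU μ E
  | [], _ => ⟨var, by simp [UnifiesAll], fun θ _ => by simp⟩
  | (var x, t) :: E, ⟨θ, hθ⟩ => by
    by_cases hxt : t = var x
    · obtain ⟨μ, hμ⟩ := exists_isStrongMGU E ⟨θ, (unifiesAll_cons.1 hθ).2⟩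
      exact ⟨μ, hμ.congr fun θ => by simp [hxt, unifiesAll_cons]⟩
    · have hx : θ x = t.subst θ := by simpa using (unifiesAll_cons.1 hθ).1
      have hocc := not_mem_vars_of_unifies hx hxt
      obtain ⟨μ, hμ⟩ := exists_isStrongMGU (substEqns (Function.update var x t) E)
        ⟨θ, by rw [unifiesAll_substEqns, update_subst_eq hx]; exact (unifiesAll_cons.1 hθ).2⟩
      exact ⟨_, hμ.update hocc⟩
  | (app f ss, var x) :: E, ⟨θ, hθ⟩ => by
    have hx : θ x = (app f ss).subst θ := by simpa using (unifiesAll_cons.1 hθ).1.symm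
    have hocc := not_mem_vars_of_unifies hx (by simp)
    obtain ⟨μ, hμ⟩ := exists_isStrongMGU (substEqns (Function.update var x (app f ss)) E)
      ⟨θ, by rw [unifiesAll_substEqns, update_subst_eq hx]; exact (unifiesAll_cons.1 hθ).2⟩
    exact ⟨_, (hμ.update hocc).congr fun _ => unifiesAll_swap⟩
  | (app f ss, app g ts) :: E, ⟨θ, hθ⟩ => by
    obtain ⟨rfl, hmap⟩ : f = g ∧ ss.map (subst θ) = ts.map (subst θ) := by
      simpa using (unifiesAll_cons.1 hθ).1
    have hlen : ss.length = ts.length := by simpa using congrArg List.length hmap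
    obtain ⟨μ, hμ⟩ := exists_isStrongMGU (ss.zip ts ++ E) ⟨θ, (unifiesAll_decompose hlen).1 hθ⟩
    exact ⟨μ, hμ.congr fun _ => (unifiesAll_decompose hlen).symm⟩
termination_by E => ((eqnVars E).card, eqnSize E)
decreasing_by
  · exact Prod.Lex.right' _ (Finset.card_le_card (eqnVars_subset_cons _ _)) (eqnSize_lt_cons _ _)
  · exact Prod.Lex.left _ _ (card_eqnVars_substEqns_update_lt hocc E)
  · rw [eqnVars_swap]
    exact Prod.Lex.left _ _ (card_eqnVars_substEqns_update_lt hocc E)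
  · exact Prod.Lex.right' _ (Finset.card_le_card (eqnVars_decompose_subset f g ss ts E))
      (eqnSize_decompose_lt f g ss ts E)

theorem IsStrongMGU.isMGU {μ : ℕ → Term F} {s t : Term F} (h : IsStrongMGU μ [(s, t)]) :
    IsMGU μ s t :=
  ⟨by simpa [UnifiesAll] using h.1,
    fun θ hθ => ⟨θ, congrFun (h.2 θ (by simpa [UnifiesAll] using hθ))⟩⟩

theorem subst_subst_of_isStrongMGU {μ θ : ℕ → Term F} {E : List (Term F × Term F)}
    (hμ : IsStrongMGU μ E) (hθ : UnifiesAll θ E) (u : Term F) :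
    (u.subst μ).subst θ = u.subst θ := by
  rw [subst_subst, hμ.2 θ hθ]

end Term

open Term in
theorem eq_or_exists_isCPAt_of_overlap {F : Type} {S : TRS F} {l₁ r₁ l₂ r₂ l2p s : Term F}
    {p : List ℕ} {θ : ℕ → Term F}
    (h₁ : ∃ lr ∈ S, IsVariantP lr (l₁, r₁)) (h₂ : ∃ lr ∈ S, IsVariantP lr (l₂, r₂))
    (hdisj : (l₁.vars ∪ r₁.vars) ∩ (l₂.vars ∪ r₂.vars) = ∅)
    (hsub : l₂.subtermAt p = some l2p) (hfun : l2p.isFun) (hr₁ : r₁.vars ⊆ l₁.vars)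
    (hθ : l₁.subst θ = l2p.subst θ) (hs : (l₂.subst θ).replaceAt p (r₁.subst θ) = some s) :
    s = r₂.subst θ ∨ ∃ q u v δ, IsCPAt S q u v ∧ s = u.subst δ ∧ r₂.subst θ = v.subst δ := by
  by_cases htriv : p = [] ∧ IsVariantP (l₁, r₁) (l₂, r₂)
  · obtain ⟨rfl, π, hl, hr⟩ := htriv
    simp only [subtermAt, replaceAt, Option.some.injEq] at hsub hs
    subst hsub hs
    dsimp only at hl hr
    left
    rw [hr, rename_subst]
    rw [hl, rename_subst] at hθ
    exact subst_congr fun x hx => eq_of_subst_eq_of_mem_vars hθ (hr₁ hx)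
  · have hθ' : UnifiesAll θ [(l₁, l2p)] := by simpa [UnifiesAll, Unifies] using hθ
    obtain ⟨μ, hμ⟩ := exists_isStrongMGU _ ⟨θ, hθ'⟩
    obtain ⟨u, hu⟩ := exists_replaceAt_of_subtermAt (r₁.subst μ) (subtermAt_subst μ hsub)
    refine Or.inr ⟨p, u, r₂.subst μ, θ, ⟨l₁, r₁, l₂, r₂, μ, l2p, h₁, h₂, hdisj, hsub, hfun,
      hμ.isMGU, fun hp hv => htriv ⟨hp, hv⟩, hu, rfl⟩, ?_, ?_⟩
    · have := replaceAt_subst θ hu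
      simp only [subst_subst_of_isStrongMGU hμ hθ', hs, Option.some.injEq] at this
      exact this
    · rw [subst_subst_of_isStrongMGU hμ hθ']

theorem IsLogical.subst {F : Type} {Fth : Set F} {t : Term F} {σ : ℕ → Term F}
    (h : IsLogical Fth t) (hσ : ∀ x ∈ t.vars, IsLogical Fth (σ x)) :
    IsLogical Fth (t.subst σ) := by
  induction h with
  | var x => simpa using hσ x
  | @app f ts hf _ ih =>
    rw [Term.subst_app]
    refine IsLogical.app hf fun u hu => ?_
    obtain ⟨t, ht, rfl⟩ := List.mem_map.1 hu
    exact ih t ht fun x hx => hσ x (Term.mem_vars_app.2 ⟨t, ht, hx⟩)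

theorem IsLogical.rename {F : Type} {Fth : Set F} {t : Term F} (h : IsLogical Fth t)
    (π : ℕ → ℕ) : IsLogical Fth (t.rename π) :=
  h.subst fun _ _ => .var _

namespace LCTRS

variable {F : Type} {R : LCTRS F}

open Term

theorem WF.val_subset_Fth (hwf : R.WF) : R.Val ⊆ R.Fth := hwf.1

theorem WF.J_app_val (hwf : R.WF) {v : F} (hv : v ∈ R.Val) : R.J (.app v []) = v :=
  hwf.2.2.2.2.1 v hv

theorem WF.tt_mem (hwf : R.WF) : R.tt ∈ R.Val := hwf.2.2.2.2.2.1

theorem WF.andS_mem (hwf : R.WF) : R.andS ∈ R.Fth := hwf.2.2.2.2.2.2.1.1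

theorem WF.eqS_mem (hwf : R.WF) : R.eqS ∈ R.Fth := hwf.2.2.2.2.2.2.2.2.1.1

theorem WF.J_conj_eq_tt_iff (hwf : R.WF) {a b : Term F} (ha : IsLogical R.Fth a)
    (hb : IsLogical R.Fth b) (hga : Ground a) (hgb : Ground b) :
    R.J (R.conj a b) = R.tt ↔ R.J a = R.tt ∧ R.J b = R.tt :=
  hwf.2.2.2.2.2.2.2.2.2.2.1 a b ha hb hga hgb

theorem WF.J_eqS_eq_tt_iff (hwf : R.WF) {a b : Term F} (ha : IsLogical R.Fth a)
    (hb : IsLogical R.Fth b) (hga : Ground a) (hgb : Ground b) :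
    R.J (.app R.eqS [a, b]) = R.tt ↔ R.J a = R.J b :=
  hwf.2.2.2.2.2.2.2.2.2.2.2.1 a b ha hb hga hgb

theorem WF.isLogical_cond (hwf : R.WF) {ρ : Rule F} (hρ : ρ ∈ R.rules) :
    IsLogical R.Fth ρ.cond :=
  (hwf.2.2.2.2.2.2.2.2.2.2.2.2 ρ hρ).2

theorem ground_iff {t : Term F} : Ground t ↔ ∀ x, x ∉ t.vars :=
  List.eq_nil_iff_forall_not_mem

theorem subst_eq_self_of_ground {t : Term F} (h : Ground t) (σ : ℕ → Term F) :
    t.subst σ = t :=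
  (subst_congr (δ := .var) fun x hx => absurd hx (ground_iff.1 h x)).trans (subst_var_eq t)

theorem isVal.ground {t : Term F} (h : R.isVal t) : Ground t := by
  obtain ⟨v, -, rfl⟩ := h
  simp [Ground, varsList]

theorem isVal.subst {t : Term F} (h : R.isVal t) (σ : ℕ → Term F) : t.subst σ = t :=
  subst_eq_self_of_ground h.ground σ

theorem isVal.isLogical (hwf : R.WF) {t : Term F} (h : R.isVal t) : IsLogical R.Fth t := by
  obtain ⟨v, hv, rfl⟩ := h
  exact .app (hwf.val_subset_Fth hv) (by simp)

theorem isVal.ne_var {t : Term F} (h : R.isVal t) (x : ℕ) : t ≠ .var x := by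
  obtain ⟨v, -, rfl⟩ := h
  simp

theorem ground_subst_of_valAssign {t : Term F} {γ : ℕ → Term F} (h : R.valAssign t.vars γ) :
    Ground (t.subst γ) :=
  ground_iff.2 fun x hx => by
    obtain ⟨y, hy, hxy⟩ := mem_vars_subst.1 hx
    exact ground_iff.1 (h y hy).ground x hxy

theorem isLogical_subst_of_valAssign (hwf : R.WF) {t : Term F} {γ : ℕ → Term F}
    (ht : IsLogical R.Fth t) (h : R.valAssign t.vars γ) : IsLogical R.Fth (t.subst γ) :=
  ht.subst fun x hx => (h x hx).isLogical hwf

theorem validC_iff_of_ground {t : Term F} (h : Ground t) : R.validC t ↔ R.J t = R.tt :=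
  ⟨fun hv => by simpa using hv .var fun x hx => absurd hx (ground_iff.1 h x),
    fun hJ γ _ => by rwa [subst_eq_self_of_ground h]⟩

@[simp] theorem subst_conj (a b : Term F) (σ : ℕ → Term F) :
    (R.conj a b).subst σ = R.conj (a.subst σ) (b.subst σ) := by
  simp [conj]

@[simp] theorem mem_vars_conj {a b : Term F} {x : ℕ} :
    x ∈ (R.conj a b).vars ↔ x ∈ a.vars ∨ x ∈ b.vars := by
  simp [conj]

theorem isLogical_conj (hwf : R.WF) {a b : Term F} (ha : IsLogical R.Fth a)
    (hb : IsLogical R.Fth b) : IsLogical R.Fth (R.conj a b) :=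
  .app hwf.andS_mem (by simp [ha, hb])

theorem respectsC_conj (hwf : R.WF) {a b : Term F} {γ : ℕ → Term F}
    (ha : IsLogical R.Fth a) (hb : IsLogical R.Fth b) (h : R.respectsC γ (R.conj a b)) :
    R.respectsC γ a ∧ R.respectsC γ b := by
  have hγa : R.valAssign a.vars γ := fun x hx => h.1 x (mem_vars_conj.2 (.inl hx))
  have hγb : R.valAssign b.vars γ := fun x hx => h.1 x (mem_vars_conj.2 (.inr hx))
  have hJ := (validC_iff_of_ground (ground_subst_of_valAssign h.1)).1 h.2
  rw [subst_conj, hwf.J_conj_eq_tt_iff (isLogical_subst_of_valAssign hwf ha hγa)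
    (isLogical_subst_of_valAssign hwf hb hγb) (ground_subst_of_valAssign hγa)
    (ground_subst_of_valAssign hγb)] at hJ
  exact ⟨⟨hγa, (validC_iff_of_ground (ground_subst_of_valAssign hγa)).2 hJ.1⟩,
    ⟨hγb, (validC_iff_of_ground (ground_subst_of_valAssign hγb)).2 hJ.2⟩⟩

theorem respectsC_comp {ψ : Term F} {σ₀ σ : ℕ → Term F}
    (hσ₀ : ∀ x ∈ ψ.vars, R.isVal (σ₀ x) ∨ ∃ y, σ₀ x = .var y)
    (hσ : R.respectsC σ (ψ.subst σ₀)) : R.respectsC (fun x => (σ₀ x).subst σ) ψ := by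
  refine ⟨fun x hx => ?_, by simpa [subst_subst] using hσ.2⟩
  show R.isVal ((σ₀ x).subst σ)
  rcases hσ₀ x hx with hv | ⟨y, hy⟩
  · rwa [hv.subst]
  · rw [hy, subst_var]
    exact hσ.1 y (mem_vars_subst.2 ⟨x, hx, by simp [hy]⟩)

theorem mem_vars_bigConj {l : List (Term F)} {x : ℕ} :
    x ∈ (R.bigConj l).vars ↔ ∃ u ∈ l, x ∈ u.vars := by
  induction l with
  | nil => simp [bigConj, trueT]
  | cons a l ih => simp [bigConj, conj] at ih ⊢; rw [ih]

theorem isLogical_bigConj (hwf : R.WF) {l : List (Term F)}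
    (h : ∀ u ∈ l, IsLogical R.Fth u) : IsLogical R.Fth (R.bigConj l) := by
  induction l with
  | nil => exact .app (hwf.val_subset_Fth hwf.tt_mem) (by simp)
  | cons a l ih =>
    exact isLogical_conj hwf (h a (by simp)) (ih fun u hu => h u (by simp [hu]))

theorem mem_vars_EC {ρ : Rule F} {x : ℕ} : x ∈ (R.EC ρ).vars ↔ x ∈ EVarList ρ := by
  simp [EC, mem_vars_bigConj]

theorem isLogical_EC (hwf : R.WF) (ρ : Rule F) : IsLogical R.Fth (R.EC ρ) :=
  isLogical_bigConj hwf fun u hu => by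
    obtain ⟨x, -, rfl⟩ := List.mem_map.1 hu
    exact .app hwf.eqS_mem (by simp [IsLogical.var])

theorem LVar_eq_vars_cond_union_vars_EC (ρ : Rule F) :
    LVar ρ = ρ.cond.vars ∪ (R.EC ρ).vars := by
  ext x
  simp only [LVar, Set.mem_union, Set.mem_sdiff, mem_vars_EC, EVarList, List.mem_filter]
  simp only [vars, Set.mem_ofPred_eq, Bool.not_eq_true', Bool.or_eq_false_iff,
    List.contains_eq_mem, decide_eq_false_iff_not]
  tauto

end LCTRS

/-! ### Value instances of rules: the rules of `R̄` -/

namespace Rule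

variable {F : Type}

open Term

def rename (π : ℕ → ℕ) (ρ : Rule F) : Rule F :=
  ⟨ρ.lhs.rename π, ρ.rhs.rename π, ρ.cond.rename π⟩

theorem isVariantR_iff {a b : Rule F} : IsVariantR a b ↔ ∃ π : ℕ ≃ ℕ, b = a.rename π := by
  simp only [IsVariantR, rename]
  constructor
  · rintro ⟨π, h₁, h₂, h₃⟩
    exact ⟨π, by cases b; simp_all⟩
  · rintro ⟨π, rfl⟩
    exact ⟨π, rfl, rfl, rfl⟩

theorem mem_LVar_rename (π : ℕ ≃ ℕ) {ρ : Rule F} {x : ℕ} :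
    π x ∈ LVar (ρ.rename π) ↔ x ∈ LVar ρ := by
  simp [LVar, rename, mem_vars_rename]

open Classical in
/-- The substitution `τ` with `Dom(τ) = LVar(ρ)` in the definition of `R̄`, taken from `θ`. -/
noncomputable def valueInst (ρ : Rule F) (θ : ℕ → Term F) : ℕ → Term F :=
  (LVar ρ).piecewise θ var

section valueInst

variable {R : LCTRS F} {ρ : Rule F} {θ : ℕ → Term F}

theorem valueInst_of_mem {x : ℕ} (hx : x ∈ LVar ρ) : ρ.valueInst θ x = θ x := by
  simp [valueInst, Set.piecewise, hx]

theorem valueInst_of_not_mem {x : ℕ} (hx : x ∉ LVar ρ) : ρ.valueInst θ x = var x := by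
  simp [valueInst, Set.piecewise, hx]

theorem subst_valueInst_of_vars_subset {u : Term F} (hu : u.vars ⊆ LVar ρ) :
    u.subst (ρ.valueInst θ) = u.subst θ :=
  subst_congr fun _ hx => valueInst_of_mem (hu hx)

theorem subst_valueInst_subst (hθ : ∀ x ∈ LVar ρ, R.isVal (θ x)) (u : Term F) :
    (u.subst (ρ.valueInst θ)).subst θ = u.subst θ := by
  rw [subst_subst]
  refine subst_congr fun x _ => ?_
  by_cases hx : x ∈ LVar ρ
  · rw [valueInst_of_mem hx, (hθ x hx).subst]
  · rw [valueInst_of_not_mem hx, subst_var]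

theorem mem_vars_subst_valueInst (hθ : ∀ x ∈ LVar ρ, R.isVal (θ x)) {u : Term F} {x : ℕ} :
    x ∈ (u.subst (ρ.valueInst θ)).vars ↔ x ∈ u.vars ∧ x ∉ LVar ρ := by
  rw [mem_vars_subst]
  constructor
  · rintro ⟨y, hy, hxy⟩
    by_cases hyL : y ∈ LVar ρ
    · rw [valueInst_of_mem hyL] at hxy
      exact absurd hxy (LCTRS.ground_iff.1 (hθ y hyL).ground x)
    · rw [valueInst_of_not_mem hyL, mem_vars_var] at hxy
      exact hxy ▸ ⟨hy, hyL⟩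
  · rintro ⟨hx, hxL⟩
    exact ⟨x, hx, by simp [valueInst_of_not_mem hxL]⟩

theorem vars_valueInst_subset_ruleVars (hθ : ∀ x ∈ LVar ρ, R.isVal (θ x)) :
    (ρ.lhs.subst (ρ.valueInst θ)).vars ∪ (ρ.rhs.subst (ρ.valueInst θ)).vars ⊆ ruleVars ρ :=
  (Set.union_subset_union (fun _ hx => ((mem_vars_subst_valueInst hθ).1 hx).1)
    fun _ hx => ((mem_vars_subst_valueInst hθ).1 hx).1).trans Set.subset_union_left

theorem vars_rhs_valueInst_subset (hθ : ∀ x ∈ LVar ρ, R.isVal (θ x)) :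
    (ρ.rhs.subst (ρ.valueInst θ)).vars ⊆ (ρ.lhs.subst (ρ.valueInst θ)).vars := by
  intro x hx
  obtain ⟨hxr, hxL⟩ := (mem_vars_subst_valueInst hθ).1 hx
  refine (mem_vars_subst_valueInst hθ).2 ⟨?_, hxL⟩
  by_contra hxl
  exact hxL (.inr ⟨hxr, hxl⟩)

end valueInst

theorem valueInst_rename (π : ℕ ≃ ℕ) {R : LCTRS F} {ρ : Rule F} {θ : ℕ → Term F}
    (hθ : ∀ x ∈ LVar (ρ.rename π), R.isVal (θ x)) (u : Term F) :
    (u.rename π).subst ((ρ.rename π).valueInst θ) = (u.subst (ρ.valueInst (θ ∘ π))).rename π := by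
  rw [rename_subst, Term.rename, subst_subst]
  refine subst_congr fun x _ => ?_
  by_cases hx : x ∈ LVar ρ
  · have hx' := (mem_LVar_rename π).2 hx
    simp only [Function.comp_apply, valueInst_of_mem hx', valueInst_of_mem hx, (hθ _ hx').subst]
  · have hx' : π x ∉ LVar (ρ.rename π) := fun h => hx ((mem_LVar_rename π).1 h)
    simp [valueInst_of_not_mem hx', valueInst_of_not_mem hx]

end Rule

namespace LCTRS

variable {F : Type} {R : LCTRS F}

open Term Rule

theorem exists_eq_map_of_forall_isVal :
    ∀ {l : List (Term F)}, (∀ u ∈ l, R.isVal u) →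
      ∃ vs : List F, (∀ v ∈ vs, v ∈ R.Val) ∧ l = vs.map fun v => .app v []
  | [], _ => ⟨[], by simp⟩
  | u :: l, h => by
    obtain ⟨vs, hvs, rfl⟩ := exists_eq_map_of_forall_isVal (l := l) fun u hu => h u (by simp [hu])
    obtain ⟨v, hv, rfl⟩ := h u (by simp)
    exact ⟨v :: vs, List.forall_mem_cons.2 ⟨hv, hvs⟩, rfl⟩

theorem mem_barTRS_of_mem_rules {ρ : Rule F} (hρ : ρ ∈ R.rules) {θ : ℕ → Term F}
    (hθ : ∀ x ∈ LVar ρ, R.isVal (θ x)) (hvalid : R.validC (ρ.cond.subst θ)) :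
    (ρ.lhs.subst (ρ.valueInst θ), ρ.rhs.subst (ρ.valueInst θ)) ∈ barTRS R := by
  refine .inl ⟨ρ, hρ, ρ.valueInst θ, ?_, fun x hx => ?_, ?_, rfl⟩
  · ext x
    by_cases hx : x ∈ LVar ρ
    · simpa [Dom, valueInst_of_mem hx, hx] using (hθ x hx).ne_var x
    · simp [Dom, valueInst_of_not_mem hx, hx]
  · rw [valueInst_of_mem hx]; exact hθ x hx
  · rwa [subst_valueInst_of_vars_subset fun x hx => .inl hx]

theorem mem_barTRS_of_calcRule (hwf : R.WF) {f : F} (hf : f ∈ R.Fth \ R.Val)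
    {θ : ℕ → Term F} (hθ : ∀ x ∈ LVar (R.calcRule f), R.isVal (θ x))
    (hvalid : R.validC ((R.calcRule f).cond.subst θ)) :
    ((R.calcRule f).lhs.subst ((R.calcRule f).valueInst θ),
      (R.calcRule f).rhs.subst ((R.calcRule f).valueInst θ)) ∈ barTRS R := by
  obtain ⟨n, hn⟩ : ∃ n, R.arity f = n := ⟨_, rfl⟩
  have hL : (R.calcRule f).lhs = .app f ((List.range n).map var) := by simp [calcRule, hn]
  have hR : (R.calcRule f).rhs = .var n := by simp [calcRule, hn]
  have hC : (R.calcRule f).cond = .app R.eqS [.var n, (R.calcRule f).lhs] := by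
    simp [calcRule, hn]
  have hLVar : ∀ i ≤ n, i ∈ LVar (R.calcRule f) := fun i hi => .inl <| by
    rcases hi.lt_or_eq with hi | rfl <;> simp [hC, hL, vars, varsList, List.mem_flatten, hi]
  obtain ⟨vs, hvs, hargs⟩ := exists_eq_map_of_forall_isVal (R := R)
    (l := (List.range n).map θ) (by simpa using fun i hi => hθ i (hLVar i hi.le))
  obtain ⟨w, hw, hθn⟩ := hθ n (hLVar n le_rfl)
  have hlen : vs.length = n := by simpa using (congrArg List.length hargs).symm
  set a := Term.app f (vs.map fun v => .app v [])
  have hlhs : (R.calcRule f).lhs.subst θ = a := by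
    simp [hL, a, ← hargs, Function.comp_def]
  have hlhs' : (R.calcRule f).lhs.subst ((R.calcRule f).valueInst θ) = a := by
    rw [subst_valueInst_of_vars_subset fun x hx => .inl (by rw [hC]; simp [hx]), hlhs]
  have hrhs : (R.calcRule f).rhs.subst ((R.calcRule f).valueInst θ) = .app w [] := by
    rw [hR, subst_var, valueInst_of_mem (hLVar n le_rfl), hθn]
  have hcond : (R.calcRule f).cond.subst θ = .app R.eqS [.app w [], a] := by
    simp [hC, hlhs, hθn]
  have hga : Ground a := by simp [Ground, a, varsList, List.flatten_eq_nil_iff]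
  have hJ : R.J (.app R.eqS [.app w [], a]) = R.tt := by
    rw [← hcond]
    refine (validC_iff_of_ground ?_).1 hvalid
    rw [hcond]
    simpa [Ground, varsList] using hga
  rw [hwf.J_eqS_eq_tt_iff (isVal.isLogical hwf ⟨w, hw, rfl⟩)
    (.app hf.1 (by simpa using fun v hv => isVal.isLogical hwf ⟨v, hvs v hv, rfl⟩))
    (isVal.ground ⟨w, hw, rfl⟩) hga, hwf.J_app_val hw] at hJ
  rw [hlhs', hrhs, hJ]
  exact .inr ⟨f, hf, vs, hlen.trans hn.symm, hvs, rfl⟩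

theorem mem_barTRS_of_mem_Rrc (hwf : R.WF) {ρ : Rule F} (hρ : ρ ∈ R.Rrc) {θ : ℕ → Term F}
    (hθ : ∀ x ∈ LVar ρ, R.isVal (θ x)) (hvalid : R.validC (ρ.cond.subst θ)) :
    (ρ.lhs.subst (ρ.valueInst θ), ρ.rhs.subst (ρ.valueInst θ)) ∈ barTRS R := by
  rcases hρ with hρ | ⟨f, hf, rfl⟩
  · exact mem_barTRS_of_mem_rules hρ hθ hvalid
  · exact mem_barTRS_of_calcRule hwf hf hθ hvalid

theorem exists_mem_barTRS_isVariantP (hwf : R.WF) {ρ' ρ : Rule F} (hρ' : ρ' ∈ R.Rrc)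
    (hv : IsVariantR ρ' ρ) {θ : ℕ → Term F} (hθ : ∀ x ∈ LVar ρ, R.isVal (θ x))
    (hvalid : R.validC (ρ.cond.subst θ)) :
    ∃ lr ∈ barTRS R, IsVariantP lr (ρ.lhs.subst (ρ.valueInst θ), ρ.rhs.subst (ρ.valueInst θ)) := by
  obtain ⟨π, rfl⟩ := isVariantR_iff.1 hv
  have hθ' : ∀ x ∈ LVar ρ', R.isVal ((θ ∘ π) x) := fun x hx => hθ _ ((mem_LVar_rename π).2 hx)
  exact ⟨_, mem_barTRS_of_mem_Rrc hwf hρ' hθ' (by rwa [← rename_subst]),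
    π, valueInst_rename π hθ _, valueInst_rename π hθ _⟩

theorem isLogical_cond_of_isVariantR (hwf : R.WF) {ρ' ρ : Rule F} (hρ' : ρ' ∈ R.Rrc)
    (hv : IsVariantR ρ' ρ) : IsLogical R.Fth ρ.cond := by
  obtain ⟨π, rfl⟩ := isVariantR_iff.1 hv
  refine IsLogical.rename ?_ π
  rcases hρ' with hρ' | ⟨f, hf, rfl⟩
  · exact hwf.isLogical_cond hρ'
  · exact .app hwf.eqS_mem (by simp [IsLogical.var, IsLogical.app hf.1])

theorem respectsC_of_respectsC_ccp (hwf : R.WF) {ρ₁' ρ₂' ρ₁ ρ₂ : Rule F} (hρ₁' : ρ₁' ∈ R.Rrc)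
    (hv₁ : IsVariantR ρ₁' ρ₁) (hρ₂' : ρ₂' ∈ R.Rrc) (hv₂ : IsVariantR ρ₂' ρ₂)
    {σ₀ σ : ℕ → Term F} (hσ₀ : ∀ x ∈ LVar ρ₁ ∪ LVar ρ₂, R.isVal (σ₀ x) ∨ ∃ y, σ₀ x = .var y)
    (hσ : R.respectsC σ (R.conj (ρ₁.cond.subst σ₀)
      (R.conj (ρ₂.cond.subst σ₀) ((R.conj (R.EC ρ₁) (R.EC ρ₂)).subst σ₀)))) :
    (∀ x ∈ LVar ρ₁ ∪ LVar ρ₂, R.isVal ((σ₀ x).subst σ)) ∧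
      R.respectsC (fun x => (σ₀ x).subst σ) ρ₁.cond ∧
      R.respectsC (fun x => (σ₀ x).subst σ) ρ₂.cond := by
  set ψ := R.conj ρ₁.cond (R.conj ρ₂.cond (R.conj (R.EC ρ₁) (R.EC ρ₂)))
  have hvars : ψ.vars = LVar ρ₁ ∪ LVar ρ₂ := by
    ext x
    simp only [ψ, mem_vars_conj, LVar_eq_vars_cond_union_vars_EC (R := R), Set.mem_union]
    tauto
  have hψ : R.respectsC (fun x => (σ₀ x).subst σ) ψ :=
    respectsC_comp (hvars ▸ hσ₀) (by simpa [ψ] using hσ)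
  obtain ⟨h₁, h₂₃⟩ := respectsC_conj hwf (isLogical_cond_of_isVariantR hwf hρ₁' hv₁)
    (isLogical_conj hwf (isLogical_cond_of_isVariantR hwf hρ₂' hv₂)
      (isLogical_conj hwf (isLogical_EC hwf _) (isLogical_EC hwf _))) hψ
  obtain ⟨h₂, -⟩ := respectsC_conj hwf (isLogical_cond_of_isVariantR hwf hρ₂' hv₂)
    (isLogical_conj hwf (isLogical_EC hwf _) (isLogical_EC hwf _)) h₂₃
  exact ⟨hvars ▸ hψ.1, h₁, h₂⟩

end LCTRS

/-- For every constrained critical pair `s ≈ t [φ]` of the LCTRS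
`R` and every substitution `σ` with `σ ⊨ φ`, either (1) `sσ = tσ`, or (2) there
exist a critical pair `u ≈ v` of the transformed TRS `R̄` and a substitution `δ`
such that `sσ = uδ` and `tσ = vδ`. -/
theorem ccp_instance_trivial_or_cp_instance {F : Type} (R : LCTRS F) (hwf : R.WF) :
    ∀ (p : List ℕ) (s t φ : Term F), IsCCPAt R p s t φ →
      ∀ σ : ℕ → Term F, R.respectsC σ φ →
        s.subst σ = t.subst σ ∨
        ∃ (q : List ℕ) (u v : Term F) (δ : ℕ → Term F),
          IsCPAt (barTRS R) q u v ∧ s.subst σ = u.subst δ ∧ t.subst σ = v.subst δ := by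
  rintro p s t φ ⟨ρ₁, ρ₂, σ₀, l2p, ⟨ρ₁', hρ₁', hv₁⟩, ⟨ρ₂', hρ₂', hv₂⟩, hdisj, hsub, hfun, hmgu,
    hσ₀, -, -, hs, rfl, rfl⟩ σ hσ
  set θ : ℕ → Term F := fun x => (σ₀ x).subst σ
  have hθ (u : Term F) : u.subst θ = (u.subst σ₀).subst σ := (Term.subst_subst σ₀ σ u).symm
  obtain ⟨hval, hvalid₁, hvalid₂⟩ := LCTRS.respectsC_of_respectsC_ccp hwf hρ₁' hv₁ hρ₂' hv₂ hσ₀ hσ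
  have hval₁ : ∀ x ∈ LVar ρ₁, R.isVal (θ x) := fun x hx => hval x (.inl hx)
  have hval₂ : ∀ x ∈ LVar ρ₂, R.isVal (θ x) := fun x hx => hval x (.inr hx)
  have hinst₁ := Rule.subst_valueInst_subst hval₁
  have hinst₂ := Rule.subst_valueInst_subst hval₂
  have := eq_or_exists_isCPAt_of_overlap
    (LCTRS.exists_mem_barTRS_isVariantP hwf hρ₁' hv₁ hval₁ hvalid₁.2)
    (LCTRS.exists_mem_barTRS_isVariantP hwf hρ₂' hv₂ hval₂ hvalid₂.2)
    (Set.eq_empty_of_subset_empty ((Set.inter_subset_inter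
      (Rule.vars_valueInst_subset_ruleVars hval₁)
      (Rule.vars_valueInst_subset_ruleVars hval₂)).trans hdisj.subset))
    (Term.subtermAt_subst _ hsub) (hfun.subst _) (Rule.vars_rhs_valueInst_subset hval₁)
    (by rw [hinst₁, hinst₂, hθ, hθ, hmgu.1])
    (by rw [hinst₁, hinst₂, hθ, hθ]; exact Term.replaceAt_subst σ hs)
  rwa [hinst₂, hθ] at this

end LCT
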